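/- (Path similarity bound theorem) If p = p̃_{s,v,t} is a cascading via-path and q is an s–t path with c(q) < c(p), then the Jaccard distance between their vertex sets satisfies δ(p,q) ≥ ω(p), where ω(p) is the via-node fraction of p. -/

import Mathlib

variable {V : Type*}

/-- `p` is a path from `u` to `w` in the digraph with edge relation `E`:
a nonempty finite sequence of vertices beginning at `u` and ending at `w`
in which every consecutive pair of vertices is an edge. -/
def IsPath (E : V → V → Prop) (p : List V) (u w : V) : Prop :=
  p ≠ [] ∧ p.head? = some u ∧ p.getLast? = some w ∧ p.Chain' E

/-- The cost of a path: the sum of the weights of its edges. -/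
def pathCost (c : V → V → ℝ) (p : List V) : ℝ :=
  ((p.zip p.tail).map fun e => c e.1 e.2).sum

/-- A shortest path from `u` to `w`: a path from `u` to `w` of minimum cost. -/
def IsShortestPath (E : V → V → Prop) (c : V → V → ℝ) (p : List V) (u w : V) : Prop :=
  IsPath E p u w ∧ ∀ q, IsPath E q u w → pathCost c p ≤ pathCost c q

/-- A via-path for `v`: an `s`–`t` path of minimum cost among all `s`–`t`
paths passing through `v`. -/
def IsViaPath (E : V → V → Prop) (c : V → V → ℝ) (s t v : V) (p : List V) : Prop :=
  IsPath E p s t ∧ v ∈ p ∧ ∀ q, IsPath E q s t → v ∈ q → pathCost c p ≤ pathCost c q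

/-- The minimum cost of an `s`–`t` path passing through `v`. -/
noncomputable def viaCost (E : V → V → Prop) (c : V → V → ℝ) (s t v : V) : ℝ :=
  sInf (pathCost c '' {p | IsPath E p s t ∧ v ∈ p})

/-- A predecessor shortest path tree rooted at the source `s`: a map `b`
assigning to each vertex `v ≠ s` a vertex `b v` with an edge from `b v` to `v`,
such that iterating `b` from any `v` terminates at `s` and the resulting path
`pathTo v` (read from `s` to `v`) is a shortest path from `s` to `v`. -/
structure PredSPT (E : V → V → Prop) (c : V → V → ℝ) (s : V) where
  b : V → V
  pathTo : V → List V
  edge : ∀ v, v ≠ s → E (b v) v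
  pathTo_src : pathTo s = [s]
  pathTo_step : ∀ v, v ≠ s → pathTo v = pathTo (b v) ++ [v]
  shortest : ∀ v, IsShortestPath E c (pathTo v) s v

/-- A successor shortest path tree rooted at the target `t`: a map `f`
assigning to each vertex `v ≠ t` a vertex `f v` with an edge from `v` to `f v`,
such that iterating `f` from any `v` terminates at `t` and the resulting path
`pathFrom v` is a shortest path from `v` to `t`. -/
structure SuccSPT (E : V → V → Prop) (c : V → V → ℝ) (t : V) where
  f : V → V
  pathFrom : V → List V
  edge : ∀ v, v ≠ t → E v (f v)
  pathFrom_tgt : pathFrom t = [t]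
  pathFrom_step : ∀ v, v ≠ t → pathFrom v = v :: pathFrom (f v)
  shortest : ∀ v, IsShortestPath E c (pathFrom v) v t

variable {E : V → V → Prop} {c : V → V → ℝ} {s t : V}

/-- The cascading via-path (CVP) of a vertex `v`: the tree path `p̃_{s,v}`
followed by the tree path `p̃_{v,t}`. -/
def CVP (B : PredSPT E c s) (F : SuccSPT E c t) (v : V) : List V :=
  B.pathTo v ++ (F.pathFrom v).tail

/-- A reciprocal pointer chain (RPC): a nonempty sequence of vertices
`(v_1, …, v_n)` such that for all `1 ≤ i < n`, `b (v_{i+1}) = v_i` and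
`f (v_i) = v_{i+1}` (as pointers of the two shortest path trees, so in
particular `v_{i+1} ≠ s` and `v_i ≠ t`). -/
def IsRPC (B : PredSPT E c s) (F : SuccSPT E c t) (r : List V) : Prop :=
  r ≠ [] ∧ r.Chain' fun x y => y ≠ s ∧ x ≠ t ∧ B.b y = x ∧ F.f x = y

/-- A maximal RPC: an RPC whose set of vertices is not a (strict) subset of the
vertex set of any other RPC. -/
def IsMaximalRPC [DecidableEq V] (B : PredSPT E c s) (F : SuccSPT E c t)
    (r : List V) : Prop :=
  IsRPC B F r ∧
    ∀ r', IsRPC B F r' → r.toFinset ⊆ r'.toFinset → r'.toFinset = r.toFinset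

/-- The Jaccard distance between the vertex sets of two paths. -/
noncomputable def jaccardDist [DecidableEq V] (p q : List V) : ℝ :=
  1 - ((p.toFinset ∩ q.toFinset).card : ℝ) / ((p.toFinset ∪ q.toFinset).card : ℝ)

/-- A plateau: a nonempty sequence of vertices in which every consecutive pair
is an edge and all vertices have the same minimum via-path cost. -/
def IsPlateau (E : V → V → Prop) (c : V → V → ℝ) (s t : V) (q : List V) : Prop :=
  q ≠ [] ∧ q.Chain' fun x y => E x y ∧ viaCost E c s t x = viaCost E c s t y

/-- A maximal plateau: a plateau whose set of vertices is not a (strict) subset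
of the vertex set of any other plateau. -/
def IsMaximalPlateau [DecidableEq V] (E : V → V → Prop) (c : V → V → ℝ)
    (s t : V) (q : List V) : Prop :=
  IsPlateau E c s t q ∧
    ∀ q', IsPlateau E c s t q' → q.toFinset ⊆ q'.toFinset → q'.toFinset = q.toFinset

/-!
All vertices of an RPC have the same CVP `p`, and the CVP of a vertex `w` is a cheapest `s`–`t`
path through `w`, because it is glued from two shortest paths. Hence an `s`–`t` path `q` cheaper
than `p` avoids every vertex of `r_p`, so `|V(p) ∩ V(q)| ≤ |V(p)| - |V(r_p)|`, and
`δ(p, q) ≥ 1 - |V(p) ∩ V(q)| / |V(p)| ≥ |V(r_p)| / |V(p)| = ω(p)`.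
-/

@[simp]
lemma pathCost_singleton (a : V) : pathCost c [a] = 0 := by
  simp [pathCost]

@[simp]
lemma pathCost_cons_cons (a b : V) (l : List V) :
    pathCost c (a :: b :: l) = c a b + pathCost c (b :: l) := by
  simp [pathCost]

lemma pathCost_append_cons (xs : List V) (y : V) (ys : List V) :
    pathCost c (xs ++ y :: ys) = pathCost c (xs ++ [y]) + pathCost c (y :: ys) := by
  induction xs using List.twoStepInduction with
  | nil => simp
  | singleton a => simp
  | cons_cons a b xs _ ih =>
    simp only [List.cons_append, pathCost_cons_cons] at ih ⊢
    rw [ih b, add_assoc]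

lemma IsPath.of_append_cons {p₁ p₂ : List V} {u w x : V}
    (hp : IsPath E (p₁ ++ x :: p₂) u w) :
    IsPath E (p₁ ++ [x]) u x ∧ IsPath E (x :: p₂) x w := by
  obtain ⟨-, hhead, hlast, hchain⟩ := hp
  obtain ⟨hchain₁, hchain₂⟩ := List.isChain_split.mp hchain
  refine ⟨⟨by simp, ?_, by simp, hchain₁⟩, ⟨by simp, rfl, ?_, hchain₂⟩⟩
  · cases p₁ <;> simpa using hhead
  · rwa [List.getLast?_append_cons] at hlast

lemma PredSPT.exists_pathTo_eq_append (B : PredSPT E c s) (w : V) :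
    ∃ l, B.pathTo w = l ++ [w] :=
  List.getLast?_eq_some_iff.mp (B.shortest w).1.2.2.1

lemma SuccSPT.exists_pathFrom_eq_cons (F : SuccSPT E c t) (w : V) :
    ∃ l, F.pathFrom w = w :: l :=
  List.head?_eq_some_iff.mp (F.shortest w).1.2.1

section CVP

variable (B : PredSPT E c s) (F : SuccSPT E c t)

lemma mem_CVP_self (w : V) : w ∈ CVP B F w := by
  obtain ⟨l, hl⟩ := B.exists_pathTo_eq_append w
  simp [CVP, hl]

lemma pathCost_CVP (w : V) :
    pathCost c (CVP B F w) = pathCost c (B.pathTo w) + pathCost c (F.pathFrom w) := by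
  obtain ⟨l₁, hl₁⟩ := B.exists_pathTo_eq_append w
  obtain ⟨l₂, hl₂⟩ := F.exists_pathFrom_eq_cons w
  rw [CVP, hl₁, hl₂, List.tail_cons, List.append_assoc, List.singleton_append,
    pathCost_append_cons]

lemma pathCost_CVP_le {w : V} {q : List V} (hq : IsPath E q s t) (hw : w ∈ q) :
    pathCost c (CVP B F w) ≤ pathCost c q := by
  obtain ⟨q₁, q₂, rfl⟩ := List.append_of_mem hw
  obtain ⟨hq₁, hq₂⟩ := hq.of_append_cons
  rw [pathCost_CVP, pathCost_append_cons]
  exact add_le_add ((B.shortest w).2 _ hq₁) ((F.shortest w).2 _ hq₂)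

lemma CVP_eq_of_reciprocal {x y : V} (hys : y ≠ s) (hxt : x ≠ t) (hb : B.b y = x)
    (hf : F.f x = y) : CVP B F x = CVP B F y := by
  obtain ⟨l, hl⟩ := F.exists_pathFrom_eq_cons y
  simp [CVP, F.pathFrom_step x hxt, B.pathTo_step y hys, hb, hf, hl]

lemma IsRPC.CVP_eq {r : List V} (hr : IsRPC B F r) {u w : V} (hu : u ∈ r) (hw : w ∈ r) :
    CVP B F u = CVP B F w := by
  obtain ⟨hne, hchain⟩ := hr
  have hhead := hchain.induction (fun x => CVP B F x = CVP B F (r.head hne)) r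
    (fun _ _ hxy hx => (CVP_eq_of_reciprocal B F hxy.1 hxy.2.1 hxy.2.2.1 hxy.2.2.2).symm.trans hx)
    (fun _ => rfl)
  exact (hhead u hu).trans (hhead w hw).symm

end CVP

lemma card_div_card_le_jaccardDist [DecidableEq V] {p q r : List V}
    (hrp : r.toFinset ⊆ p.toFinset) (hrq : Disjoint r.toFinset q.toFinset) :
    (r.toFinset.card : ℝ) / p.toFinset.card ≤ jaccardDist p q := by
  set P := p.toFinset
  set Q := q.toFinset
  set R := r.toFinset
  have hinter : (P ∩ Q).card + R.card ≤ P.card := by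
    rw [← Finset.card_union_of_disjoint (hrq.symm.mono_left Finset.inter_subset_right)]
    exact Finset.card_le_card (Finset.union_subset Finset.inter_subset_left hrp)
  have hunion : P.card ≤ (P ∪ Q).card := Finset.card_le_card Finset.subset_union_left
  rcases Nat.eq_zero_or_pos P.card with hP | hP
  · rw [hP, Nat.cast_zero, div_zero, jaccardDist, sub_nonneg]
    exact div_le_one_of_le₀ (by exact_mod_cast (Finset.card_le_card
      (Finset.inter_subset_left.trans Finset.subset_union_left))) (Nat.cast_nonneg _)
  have hP' : (0 : ℝ) < P.card := by exact_mod_cast hP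
  calc (R.card : ℝ) / P.card = 1 - (P.card - R.card : ℝ) / P.card := by field_simp; ring
    _ ≤ 1 - ((P ∩ Q).card : ℝ) / P.card := by
      gcongr
      exact le_sub_iff_add_le.mpr (by exact_mod_cast hinter)
    _ ≤ 1 - ((P ∩ Q).card : ℝ) / (P ∪ Q).card := by
      gcongr
    _ = jaccardDist p q := rfl

theorem path_similarity_bound_general [DecidableEq V]
    {E : V → V → Prop} {c : V → V → ℝ} {s t : V}
    (B : PredSPT E c s) (F : SuccSPT E c t)
    (v : V) (r : List V) (hr : IsMaximalRPC B F r) (hvr : v ∈ r)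
    (q : List V) (hq : IsPath E q s t)
    (hlt : pathCost c q < pathCost c (CVP B F v)) :
    jaccardDist (CVP B F v) q ≥
      (r.toFinset.card : ℝ) / ((CVP B F v).toFinset.card : ℝ) := by
  have hCVP : ∀ w ∈ r, CVP B F w = CVP B F v := fun w hw => hr.1.CVP_eq B F hw hvr
  refine card_div_card_le_jaccardDist (fun w hw => ?_)
    (Finset.disjoint_left.mpr fun w hw hwq => ?_)
  · rw [List.mem_toFinset] at hw ⊢
    exact hCVP w hw ▸ mem_CVP_self B F w
  · rw [List.mem_toFinset] at hw hwq
    have hcost := pathCost_CVP_le B F hq hwq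
    rw [hCVP w hw] at hcost
    exact hlt.not_ge hcost

/-- Path similarity bound theorem: If `p = p̃_{s,v,t}` is a CVP
and `q` is an `s`–`t` path with `c(q) < c(p)`, then the Jaccard distance between
their vertex sets is at least the via-node fraction `ω(p) = |V(r_p)|/|V(p)|`,
where `r_p` is the maximal RPC of the vertices whose CVP equals `p`. -/
theorem path_similarity_bound [Fintype V] [DecidableEq V]
    {E : V → V → Prop} {c : V → V → ℝ} {s t : V}
    (hc : ∀ u w, E u w → 0 ≤ c u w)
    (B : PredSPT E c s) (F : SuccSPT E c t)
    (v : V) (r : List V) (hr : IsMaximalRPC B F r) (hvr : v ∈ r)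
    (q : List V) (hq : IsPath E q s t)
    (hlt : pathCost c q < pathCost c (CVP B F v)) :
    jaccardDist (CVP B F v) q ≥
      (r.toFinset.card : ℝ) / ((CVP B F v).toFinset.card : ℝ) :=
  path_similarity_bound_general B F v r hr hvr q hq hlt
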